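/- For every q ∈ ℂ with 0 < |q| < 0.6 and arg(q) ∈ [π/4, π/2], and every x ∈ ℂ with |x| = |q|^{-5/2}, one has θ(q,x) ≠ 0. -/

import Mathlib

/-- The partial theta function `θ(q,x) = Σ_{j≥0} q^(j(j+1)/2) x^j`. -/
noncomputable def theta (q x : ℂ) : ℂ := ∑' j : ℕ, q ^ (j * (j + 1) / 2) * x ^ j

/-- The argument of a complex number, normalized to take values in `[0, 2π)`. -/
noncomputable def argTwoPi (z : ℂ) : ℝ :=
  if Complex.arg z < 0 then Complex.arg z + 2 * Real.pi else Complex.arg z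

set_option maxHeartbeats 1000000 in
lemma quartic_key (c s e : ℝ) (hcs : c^2 + s^2 = 1) (hc1 : 0.707 ≤ c) (hc2 : c ≤ 0.924)
    (hs0 : 0 ≤ s) (helb : s - 0.15 ≤ e * (3*s - 4*s^3)) (hee : e ≤ 0.72) :
    (c + 0.15 + e*(4*c^3 - 3*c))^4 ≤ 8*e := by
  have hs1 : 0.3823 ≤ s := by nlinarith
  have hs2 : s^2 ≤ 0.500151 := by nlinarith
  have hs3ub : 3*s - 4*s^3 ≤ 1 := by nlinarith [mul_nonneg (by linarith : (0:ℝ) ≤ s + 1) (sq_nonneg (2*s - 1))]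
  have hs3lb : 0.38 ≤ 3*s - 4*s^3 := by nlinarith
  have hepos : 0 < e := by
    by_contra h
    push_neg at h
    have : e * (3*s - 4*s^3) ≤ 0 := mul_nonpos_of_nonpos_of_nonneg h (by linarith)
    linarith
  have he0 : 0.2323 ≤ e := by
    have := mul_le_mul_of_nonneg_left hs3ub hepos.le
    nlinarith
  have hc3lb : -0.708 ≤ 4*c^3 - 3*c := by nlinarith [sq_nonneg (c - 0.707), mul_nonneg (sub_nonneg.2 hc1) (sq_nonneg c)]
  have hPpos : 0 ≤ c + 0.15 + e*(4*c^3 - 3*c) := by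
    rcases le_or_gt (4*c^3 - 3*c) 0 with h | h
    · nlinarith
    · nlinarith [mul_nonneg hepos.le h.le]
  rcases le_or_gt c 0.866 with hA | hA
  · have hc3 : 4*c^3 - 3*c ≤ 0 := by nlinarith
    have hsA : 0.5 ≤ s := by nlinarith
    have heA : 0.35 ≤ e := by
      have := mul_le_mul_of_nonneg_left hs3ub hepos.le
      nlinarith
    have hP : c + 0.15 + e*(4*c^3 - 3*c) ≤ 1.016 := by nlinarith [mul_nonneg hepos.le (neg_nonneg.2 hc3)]
    calc (c + 0.15 + e*(4*c^3 - 3*c))^4 ≤ 1.016^4 := pow_le_pow_left₀ hPpos hP 4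
      _ ≤ 8*e := by norm_num; linarith
  rcases le_or_gt c 0.9 with hB | hB
  · have hc3 : 4*c^3 - 3*c ≤ 0.216 := by nlinarith
    have hsA : 0.435 ≤ s := by nlinarith
    have heA : 0.285 ≤ e := by
      have := mul_le_mul_of_nonneg_left hs3ub hepos.le
      nlinarith
    have hP : c + 0.15 + e*(4*c^3 - 3*c) ≤ 1.05 + 0.216*e := by nlinarith [hepos.le]
    calc (c + 0.15 + e*(4*c^3 - 3*c))^4 ≤ (1.05 + 0.216*e)^4 := pow_le_pow_left₀ hPpos hP 4
      _ ≤ 8*e := by nlinarith [mul_nonneg (by linarith : (0:ℝ) ≤ e - 0.285) (by linarith : (0:ℝ) ≤ 0.72 - e), sq_nonneg (e - 0.5)]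
  rcases le_or_gt c 0.914 with hC | hC
  · have hc3 : 4*c^3 - 3*c ≤ 0.3123 := by nlinarith
    have hsA : 0.405 ≤ s := by nlinarith
    have heA : 0.255 ≤ e := by
      have := mul_le_mul_of_nonneg_left hs3ub hepos.le
      nlinarith
    have hP : c + 0.15 + e*(4*c^3 - 3*c) ≤ 1.064 + 0.3123*e := by nlinarith [hepos.le]
    calc (c + 0.15 + e*(4*c^3 - 3*c))^4 ≤ (1.064 + 0.3123*e)^4 := pow_le_pow_left₀ hPpos hP 4
      _ ≤ 8*e := by nlinarith [mul_nonneg (by linarith : (0:ℝ) ≤ e - 0.255) (by linarith : (0:ℝ) ≤ 0.72 - e), sq_nonneg (e - 0.5)]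
  · have hc3 : 4*c^3 - 3*c ≤ 0.3838 := by nlinarith
    have hP : c + 0.15 + e*(4*c^3 - 3*c) ≤ 1.074 + 0.3838*e := by nlinarith [hepos.le]
    calc (c + 0.15 + e*(4*c^3 - 3*c))^4 ≤ (1.074 + 0.3838*e)^4 := pow_le_pow_left₀ hPpos hP 4
      _ ≤ 8*e := by nlinarith [mul_nonneg (by linarith : (0:ℝ) ≤ e - 0.2323) (by linarith : (0:ℝ) ≤ 0.72 - e), sq_nonneg (e - 0.5)]

set_option maxHeartbeats 1000000 in
private lemma F_bound (c s t e : ℝ) (hcs : c^2 + s^2 = 1) (hc1 : 0.707 ≤ c) (hc2 : c ≤ 0.924)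
    (hs0 : 0 ≤ s) (het : 8*e ≤ t^4) (hee : e ≤ 0.72) :
    0.0225 ≤ (c + t + e*(4*c^3 - 3*c))^2 + (-s + e*(3*s - 4*s^3))^2 := by
  have hs1 : 0.3823 ≤ s := by nlinarith
  have hs2 : s^2 ≤ 0.500151 := by nlinarith
  rcases le_or_gt (e * (3*s - 4*s^3)) (s - 0.15) with h | h
  · -- imaginary part ≤ -0.15
    have him : -s + e*(3*s - 4*s^3) ≤ -0.15 := by linarith
    nlinarith [sq_nonneg (c + t + e*(4*c^3 - 3*c)), sq_nonneg (-s + e*(3*s - 4*s^3) + 0.15)]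
  · have hs3ub : 3*s - 4*s^3 ≤ 1 := by nlinarith [mul_nonneg (by linarith : (0:ℝ) ≤ s + 1) (sq_nonneg (2*s - 1))]
    have hs3lb : 0.38 ≤ 3*s - 4*s^3 := by nlinarith
    have hepos : 0 < e := by
      by_contra hcon
      push_neg at hcon
      have : e * (3*s - 4*s^3) ≤ 0 := mul_nonpos_of_nonpos_of_nonneg hcon (by linarith)
      linarith
    have he0 : 0.2323 ≤ e := by
      have := mul_le_mul_of_nonneg_left hs3ub hepos.le
      nlinarith
    have hc3lb : -0.708 ≤ 4*c^3 - 3*c := by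
      nlinarith [sq_nonneg (c - 0.707), mul_nonneg (sub_nonneg.2 hc1) (sq_nonneg c)]
    have hec3 : -0.51 ≤ e*(4*c^3 - 3*c) := by
      rcases le_or_gt (4*c^3 - 3*c) 0 with hneg | hpos
      · nlinarith
      · nlinarith [mul_nonneg hepos.le hpos.le]
    rcases le_or_gt 0 t with ht | ht
    · -- t ≥ 0 : t ≥ 1.167, real part large
      have ht4 : 1.8584 ≤ t^4 := by linarith
      have ht1 : 1.167 ≤ t := by
        by_contra hcon
        push_neg at hcon
        have h4 : t^4 ≤ 1.167^4 := pow_le_pow_left₀ ht hcon.le 4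
        norm_num at h4
        linarith
      have hre : 0.15 ≤ c + t + e*(4*c^3 - 3*c) := by linarith
      nlinarith [sq_nonneg (-s + e*(3*s - 4*s^3))]
    · -- t < 0 : real part ≤ -0.15
      have hkey := quartic_key c s e hcs hc1 hc2 hs0 h.le hee
      have hPpos : 0 ≤ c + 0.15 + e*(4*c^3 - 3*c) := by linarith
      have htau : c + 0.15 + e*(4*c^3 - 3*c) ≤ -t := by
        have h4 : (c + 0.15 + e*(4*c^3 - 3*c))^4 ≤ (-t)^4 := by
          calc (c + 0.15 + e*(4*c^3 - 3*c))^4 ≤ 8*e := hkey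
            _ ≤ t^4 := het
            _ = (-t)^4 := by ring
        exact le_of_pow_le_pow_left₀ (by norm_num) (by linarith) h4
      have hre : c + t + e*(4*c^3 - 3*c) ≤ -0.15 := by linarith
      nlinarith [sq_nonneg (-s + e*(3*s - 4*s^3)), sq_nonneg (c + t + e*(4*c^3 - 3*c) + 0.15)]

set_option maxHeartbeats 1000000 in
theorem theta_ne_zero_circle52 (q : ℂ) (hq : 0 < ‖q‖ ∧ ‖q‖ < 0.6)
    (harg : argTwoPi q ∈ Set.Icc (Real.pi / 4) (Real.pi / 2)) (x : ℂ)
    (hx : ‖x‖ = ‖q‖ ^ (-(5 : ℝ) / 2 : ℝ)) :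
    theta q x ≠ 0 := by
  obtain ⟨hq0, hq6⟩ := hq
  have hqne : q ≠ 0 := by
    intro h; rw [h] at hq0; simp at hq0
  set Q : ℝ := ‖q‖ with hQdef
  have hQ6 : Q ≤ 0.6 := le_of_lt hq6
  -- argument of q is in [π/4, π/2]
  obtain ⟨harg1, harg2⟩ := harg
  have hψ : Real.pi/4 ≤ Complex.arg q ∧ Complex.arg q ≤ Real.pi/2 := by
    unfold argTwoPi at harg1 harg2
    by_cases h : Complex.arg q < 0
    · rw [if_pos h] at harg1 harg2
      have := Complex.neg_pi_lt_arg q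
      have hpi := Real.pi_pos
      constructor <;> linarith
    · rw [if_neg h] at harg1 harg2
      exact ⟨harg1, harg2⟩
  set ψ : ℝ := Complex.arg q with hψdef
  set φ : ℝ := ψ/2 with hφdef
  have hpi := Real.pi_pos
  have hφ1 : Real.pi/8 ≤ φ := by rw [hφdef]; linarith [hψ.1]
  have hφ2 : φ ≤ Real.pi/4 := by rw [hφdef]; linarith [hψ.2]
  have hφ0 : 0 ≤ φ := by linarith
  have hφpi : φ ≤ Real.pi := by linarith
  set c : ℝ := Real.cos φ with hcdef
  set s : ℝ := Real.sin φ with hsdef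
  have hcs : c^2 + s^2 = 1 := by
    rw [hcdef, hsdef, add_comm]; exact Real.sin_sq_add_cos_sq φ
  have hs0 : 0 ≤ s := Real.sin_nonneg_of_nonneg_of_le_pi hφ0 hφpi
  -- numeric bounds on c
  have hsqrt2a : (1.414 : ℝ) ≤ Real.sqrt 2 := by
    nlinarith [Real.sq_sqrt (by norm_num : (0:ℝ) ≤ 2), Real.sqrt_nonneg 2, sq_nonneg (Real.sqrt 2 - 1.414)]
  have hsqrt2b : Real.sqrt 2 ≤ 1.41422 := by
    nlinarith [Real.sq_sqrt (by norm_num : (0:ℝ) ≤ 2), Real.sqrt_nonneg 2, sq_nonneg (Real.sqrt 2 - 1.41422)]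
  have hc1 : 0.707 ≤ c := by
    have h1 : Real.cos (Real.pi/4) ≤ c := by
      rw [hcdef]
      exact Real.cos_le_cos_of_nonneg_of_le_pi hφ0 (by linarith) hφ2
    rw [Real.cos_pi_div_four] at h1
    nlinarith
  have hc2 : c ≤ 0.924 := by
    have h1 : c ≤ Real.cos (Real.pi/8) := by
      rw [hcdef]
      exact Real.cos_le_cos_of_nonneg_of_le_pi (by linarith) hφpi hφ1
    have h2 : Real.cos (Real.pi/8) = Real.sqrt (2 + Real.sqrt 2) / 2 := Real.cos_pi_div_eight
    have h4 : (0:ℝ) ≤ 2 + Real.sqrt 2 := by positivity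
    have h5 : Real.sqrt (2 + Real.sqrt 2) ≤ 1.848 := by
      nlinarith [Real.sq_sqrt h4, Real.sqrt_nonneg (2 + Real.sqrt 2),
        sq_nonneg (Real.sqrt (2 + Real.sqrt 2) - 1.848)]
    rw [h2] at h1
    linarith
  -- rho
  set ρ : ℝ := Real.sqrt Q with hρdef
  have hρpos : 0 < ρ := Real.sqrt_pos.mpr hq0
  have hρ2 : ρ^2 = Q := Real.sq_sqrt hq0.le
  have hρub : ρ ≤ 0.775 := by nlinarith [sq_nonneg (ρ - 0.775)]
  -- |x|
  set ax : ℝ := ‖x‖ with haxdef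
  have hax : ax * ρ^5 = 1 := by
    rw [hx, hρdef, Real.sqrt_eq_rpow]
    rw [show ((Q:ℝ) ^ ((1:ℝ)/2)) ^ (5:ℕ) = (Q ^ ((1:ℝ)/2)) ^ ((5:ℕ):ℝ) by
      rw [Real.rpow_natCast]]
    rw [← Real.rpow_mul hq0.le, ← Real.rpow_add hq0]
    norm_num
  have haxpos : 0 < ax := by
    rcases lt_trichotomy ax 0 with h|h|h
    · nlinarith [mul_neg_of_neg_of_pos h (pow_pos hρpos 5)]
    · rw [h] at hax; simp at hax
    · exact h
  have hxne : x ≠ 0 := by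
    intro h
    rw [haxdef, h] at haxpos
    simp at haxpos
  -- the unit u = exp(i φ)
  set u : ℂ := (c:ℂ) + (s:ℂ)*Complex.I with hudef
  have hu_exp : u = Complex.exp ((φ:ℂ) * Complex.I) := by
    rw [Complex.exp_mul_I, hudef, hcdef, hsdef]
    simp [Complex.ofReal_cos, Complex.ofReal_sin]
  have habs_u : ‖u‖ = 1 := by
    rw [hu_exp]
    exact Complex.norm_exp_ofReal_mul_I φ
  have hqu : q = (Q:ℂ) * u^2 := by
    have h1 : (‖q‖ : ℂ) * Complex.exp ((Complex.arg q : ℂ) * Complex.I) = q :=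
      Complex.norm_mul_exp_arg_mul_I q
    have hu2 : u^2 = Complex.exp ((ψ:ℂ) * Complex.I) := by
      rw [hu_exp, ← Complex.exp_nat_mul]
      congr 1
      rw [hφdef]
      push_cast
      ring
    rw [hu2, hQdef, hψdef, h1]
  have hu_ne : u ≠ 0 := by
    intro h; rw [h] at habs_u; simp at habs_u
  have hnormSq_u : Complex.normSq u = 1 := by
    have := Complex.normSq_eq_norm_sq u
    rw [habs_u] at this; simpa using this
  have huu : (starRingEnd ℂ) u * u = 1 := by
    rw [mul_comm, Complex.mul_conj, hnormSq_u]; norm_num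
  -- a and t
  set a : ℂ := (q^2*x)⁻¹ with hadef
  have haq : a * (q^2*x) = 1 := by
    rw [hadef]
    field_simp
  have ha_abs : ‖a‖ = ρ := by
    rw [hadef, norm_inv, norm_mul, norm_pow, ← hQdef, ← haxdef]
    have h5 : ax = (ρ^5)⁻¹ := eq_inv_of_mul_eq_one_left hax
    rw [h5, ← hρ2]
    rw [show ((ρ^2)^2 * (ρ^5)⁻¹) = ρ⁻¹ by field_simp]
    rw [inv_inv]
  have ha_normSq : Complex.normSq a = Q := by
    rw [Complex.normSq_eq_norm_sq, ha_abs, hρ2]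
  have hconja : (starRingEnd ℂ) a = (Q:ℂ) * (q^2*x) := by
    have h1 : a * (starRingEnd ℂ) a = (Q:ℂ) := by
      rw [Complex.mul_conj, ha_normSq]
    calc (starRingEnd ℂ) a = (a * (starRingEnd ℂ) a) * (q^2*x) := by
          rw [mul_comm a, mul_assoc, haq, mul_one]
      _ = (Q:ℂ) * (q^2*x) := by rw [h1]
  set t : ℝ := 2 * (a * (starRingEnd ℂ) u).re with htdef
  have ht2 : t^2 ≤ 4*Q := by
    have h1 : (a * (starRingEnd ℂ) u).re^2 ≤ Complex.normSq (a * (starRingEnd ℂ) u) := by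
      rw [Complex.normSq_apply]
      nlinarith [sq_nonneg (a * (starRingEnd ℂ) u).im]
    have h2 : Complex.normSq (a * (starRingEnd ℂ) u) = Q := by
      rw [map_mul, Complex.normSq_conj, hnormSq_u, ha_normSq, mul_one]
    rw [htdef]
    nlinarith [h1, h2]
  have hstu : (t:ℂ) * u = a + q^3*x := by
    have htz : (t:ℂ) = a * (starRingEnd ℂ) u + (starRingEnd ℂ) (a * (starRingEnd ℂ) u) := by
      rw [Complex.add_conj, htdef]
      all_goals push_cast; ring
    rw [htz]
    rw [map_mul, Complex.conj_conj]
    calc (a * (starRingEnd ℂ) u + (starRingEnd ℂ) a * u) * u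
        = a * ((starRingEnd ℂ) u * u) + (starRingEnd ℂ) a * u^2 := by ring
      _ = a + ((Q:ℂ) * (q^2*x)) * u^2 := by rw [huu, hconja, mul_one]
      _ = a + q^3*x := by rw [show (Q:ℂ) * (q^2*x) * u^2 = ((Q:ℂ)*u^2) * (q^2*x) by ring, ← hqu]; ring
  -- e
  set e : ℝ := Q*t^2 - 2*Q^2 with hedef
  have het : 8*e ≤ t^4 := by nlinarith [sq_nonneg (t^2 - 4*Q)]
  have hee : e ≤ 0.72 := by nlinarith
  -- head identity
  set F : ℂ := 1 + (t:ℂ)*u + (e:ℂ)*u^4 with hFdef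
  have he4 : (e:ℂ)*u^4 = q*((t:ℂ)*u)^2 - 2*q^2 := by
    rw [hqu, hedef]
    push_cast
    ring
  clear_value a t e F
  have hT : 1 + q*x + q^3*x^2 + q^6*x^3 + q^10*x^4 = q^3*x^2*F := by
    rw [hFdef, he4, hstu]
    linear_combination (-(q*x + a*q^2*x + 1 + 2*q^5*x^2)) * haq
  -- |F| >= 0.15
  set G : ℂ := F * (starRingEnd ℂ) u with hGdef
  have hconju : (starRingEnd ℂ) u = (c:ℂ) - (s:ℂ)*Complex.I := by
    rw [hudef]
    simp [Complex.conj_ofReal]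
    ring
  have hG2 : G = (starRingEnd ℂ) u + (t:ℂ) + (e:ℂ) * u^3 := by
    rw [hGdef, hFdef]
    calc (1 + (t:ℂ)*u + (e:ℂ)*u^4) * (starRingEnd ℂ) u
        = (starRingEnd ℂ) u + (t:ℂ)*((starRingEnd ℂ) u * u) + (e:ℂ)*u^3*((starRingEnd ℂ) u * u) := by
          ring
      _ = (starRingEnd ℂ) u + (t:ℂ) + (e:ℂ) * u^3 := by rw [huu]; ring
  have hu3re : (u^3).re = c^3 - 3*c*s^2 := by
    rw [hudef]
    simp [pow_succ, Complex.mul_re, Complex.mul_im]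
    ring
  have hu3im : (u^3).im = 3*c^2*s - s^3 := by
    rw [hudef]
    simp [pow_succ, Complex.mul_re, Complex.mul_im]
    ring
  have hGre : G.re = c + t + e*(4*c^3 - 3*c) := by
    rw [hG2, hconju]
    simp only [Complex.add_re, Complex.sub_re, Complex.mul_re, Complex.mul_im,
      Complex.ofReal_re, Complex.ofReal_im, Complex.I_re, Complex.I_im, hu3re, hu3im,
      mul_zero, zero_mul, mul_one, sub_zero, zero_sub, add_zero, zero_add]
    linear_combination (-3*c*e) * hcs
  have hGim : G.im = -s + e*(3*s - 4*s^3) := by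
    rw [hG2, hconju]
    simp only [Complex.add_im, Complex.sub_im, Complex.mul_re, Complex.mul_im,
      Complex.ofReal_re, Complex.ofReal_im, Complex.I_re, Complex.I_im, hu3re, hu3im,
      mul_zero, zero_mul, mul_one, sub_zero, zero_sub, add_zero, zero_add]
    linear_combination (3*s*e) * hcs
  have habsF : 0.15 ≤ ‖F‖ := by
    have hb := F_bound c s t e hcs hc1 hc2 hs0 het hee
    have h1 : ‖G‖ ^ 2 = G.re^2 + G.im^2 := by
      rw [Complex.sq_norm, Complex.normSq_apply]; ring
    have h2 : 0.0225 ≤ ‖G‖ ^ 2 := by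
      rw [h1, hGre, hGim]; exact hb
    have h3 : ‖G‖ = ‖F‖ := by
      rw [hGdef, norm_mul, Complex.norm_conj, habs_u, mul_one]
    have h5 : (0.15:ℝ) ≤ ‖G‖ := by
      by_contra hcon
      push_neg at hcon
      have h6 : ‖G‖ ^ 2 < 0.15^2 :=
        pow_lt_pow_left₀ hcon (norm_nonneg G) (by norm_num)
      norm_num at h6
      linarith
    rw [h3] at h5
    exact h5
  -- the head sum
  have h5ax : ax = (ρ^5)⁻¹ := eq_inv_of_mul_eq_one_left hax
  have habs_head : ‖1 + q*x + q^3*x^2 + q^6*x^3 + q^10*x^4‖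
      = (Q^3 * ax^2) * ‖F‖ := by
    rw [hT, norm_mul, norm_mul, norm_pow, norm_pow, ← hQdef, ← haxdef]
  have hQax : Q^3 * ax^2 = (ρ^4)⁻¹ := by
    rw [← hρ2, h5ax]
    field_simp
  have hheadlb : 0.15 * (ρ^4)⁻¹ ≤ ‖1 + q*x + q^3*x^2 + q^6*x^3 + q^10*x^4‖ := by
    rw [habs_head, hQax, mul_comm]
    exact mul_le_mul_of_nonneg_left habsF (by positivity)
  -- tail estimates
  set f : ℕ → ℂ := fun j => q ^ (j * (j + 1) / 2) * x ^ j with hfdef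
  have htheta : theta q x = ∑' j, f j := rfl
  have hρlt1 : ρ < 1 := lt_of_le_of_lt hρub (by norm_num)
  have habs_f : ∀ k : ℕ, ‖f (k+5)‖ = ρ^((k+5)*(k+1)) := by
    intro k
    have h1 : ‖f (k+5)‖ = Q ^ ((k+5) * (k+6) / 2) * ax ^ (k+5) := by
      rw [hfdef]
      simp only
      rw [norm_mul, norm_pow, norm_pow, ← hQdef, ← haxdef]
    have hdvd : 2 ∣ (k+5) * (k+6) := (Nat.even_mul_succ_self (k+5)).two_dvd
    have h2M : 2 * ((k+5) * (k+6) / 2) = (k+5) * (k+6) := Nat.mul_div_cancel' hdvd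
    rw [h1, ← hρ2, ← pow_mul, h2M, h5ax, inv_pow, ← pow_mul,
      show (k+5)*(k+6) = (k+5)*(k+1) + 5*(k+5) by ring, pow_add]
    field_simp
  have hρ7lt1 : ρ^7 < 1 := pow_lt_one₀ hρpos.le hρlt1 (by norm_num)
  have hρ7pos : (0:ℝ) < ρ^7 := pow_pos hρpos 7
  have hbound : ∀ k : ℕ, ‖f (k+5)‖ ≤ ρ^5 * (ρ^7)^k := by
    intro k
    rw [habs_f k, ← pow_mul, ← pow_add]
    apply pow_le_pow_of_le_one hρpos.le hρlt1.le
    have hk : k ≤ k*k := by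
      rcases Nat.eq_zero_or_pos k with h|h
      · simp [h]
      · calc k = 1*k := (one_mul k).symm
          _ ≤ k*k := Nat.mul_le_mul_right k h
    calc 5 + 7*k ≤ 5 + 6*k + k*k := by omega
      _ = (k+5)*(k+1) := by ring
  have hg_sum : Summable (fun k : ℕ => ρ^5 * (ρ^7)^k) :=
    (summable_geometric_of_lt_one hρ7pos.le hρ7lt1).mul_left _
  have hsum_abs5 : Summable (fun k => ‖f (k+5)‖) :=
    Summable.of_nonneg_of_le (fun k => norm_nonneg _) hbound hg_sum
  have hsum5 : Summable (fun k => f (k+5)) := by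
    apply Summable.of_norm
    exact hsum_abs5
  have hsumf : Summable f := (summable_nat_add_iff 5).mp hsum5
  have hsplit : (∑ i ∈ Finset.range 5, f i) + ∑' k, f (k+5) = ∑' j, f j :=
    Summable.sum_add_tsum_nat_add 5 hsumf
  have hhead5 : ∑ i ∈ Finset.range 5, f i = 1 + q*x + q^3*x^2 + q^6*x^3 + q^10*x^4 := by
    rw [hfdef]
    simp [Finset.sum_range_succ]
  clear_value f
  have htail_le : ‖∑' k, f (k+5)‖ ≤ ρ^5 * (1 - ρ^7)⁻¹ := by
    calc ‖∑' k, f (k+5)‖ ≤ ∑' k, ‖f (k+5)‖ := by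
          have h1 : ‖∑' k, f (k+5)‖ ≤ ∑' k, ‖f (k+5)‖ :=
            norm_tsum_le_tsum_norm hsum_abs5
          exact h1
      _ ≤ ∑' k, ρ^5 * (ρ^7)^k := Summable.tsum_le_tsum hbound hsum_abs5 hg_sum
      _ = ρ^5 * ∑' k, (ρ^7)^k := tsum_mul_left
      _ = ρ^5 * (1 - ρ^7)⁻¹ := by rw [tsum_geometric_of_lt_one hρ7pos.le hρ7lt1]
  -- final contradiction
  intro h0
  have hzero : (∑ i ∈ Finset.range 5, f i) + ∑' k, f (k+5) = 0 := by
    rw [hsplit, ← htheta, h0]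
  have hheq : (1:ℂ) + q*x + q^3*x^2 + q^6*x^3 + q^10*x^4 = -(∑' k, f (k+5)) := by
    rw [← hhead5]
    linear_combination hzero
  have hfinal : 0.15*(ρ^4)⁻¹ ≤ ρ^5*(1 - ρ^7)⁻¹ := by
    calc 0.15*(ρ^4)⁻¹ ≤ ‖1 + q*x + q^3*x^2 + q^6*x^3 + q^10*x^4‖ := hheadlb
      _ = ‖∑' k, f (k+5)‖ := by rw [hheq, norm_neg]
      _ ≤ ρ^5 * (1 - ρ^7)⁻¹ := htail_le
  have h1m : (0:ℝ) < 1 - ρ^7 := by linarith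
  have hmul := mul_le_mul_of_nonneg_left hfinal (mul_pos (pow_pos hρpos 4) h1m).le
  have heq1 : (ρ^4*(1-ρ^7))*(0.15*(ρ^4)⁻¹) = 0.15*(1-ρ^7) := by
    field_simp
  have heq2 : (ρ^4*(1-ρ^7))*(ρ^5*(1-ρ^7)⁻¹) = ρ^9 := by
    field_simp
  rw [heq1, heq2] at hmul
  have h7 : ρ^7 ≤ 0.775^7 := pow_le_pow_left₀ hρpos.le hρub 7
  have h9 : ρ^9 ≤ 0.775^9 := pow_le_pow_left₀ hρpos.le hρub 9
  norm_num at h7 h9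
  linarith
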